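/- arXiv:math/0702284 — 2 statements merged into one kernel-verified Lean document; each statement's English description precedes it below -/
import Mathlib

section
/- For every invertible real 2×2 matrix P, every a > 0, θ ∈ [0, 2π) and b ∈ ℝ², the energy of the geometrically anisotropic coherent state is independent of (a, θ, b, P) and equals (1/(2π)²) ∫_{ℝ²} |V_{ξ}(ω)|² d²ω = (1/(2π)) ∫₀^∞ ω^γ V₁D(ω)² dω = r/2. -/
/- Geometric anisotropy: common definitions -/
noncomputable section
open MeasureTheory Real Set

/-- Euclidean norm of a vector in ℝ². -/
def nrm (v : Fin 2 → ℝ) : ℝ := Real.sqrt (v 0 ^ 2 + v 1 ^ 2)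

/-- Euclidean inner product on ℝ². -/
def dot2 (v w : Fin 2 → ℝ) : ℝ := v 0 * w 0 + v 1 * w 1

/-- Rotation matrix through angle θ. -/
def rot (θ : ℝ) : Matrix (Fin 2) (Fin 2) ℝ :=
  !![Real.cos θ, -Real.sin θ; Real.sin θ, Real.cos θ]

/-- 1-D Morse profile, with r = (2β+1)/γ. -/
def V1D (β γ : ℝ) (ω : ℝ) : ℝ :=
  if 0 < ω then
    (2 ^ (((2 * β + 1) / γ + 1) / 2) * Real.sqrt (π * γ) /
      Real.sqrt (Real.Gamma ((2 * β + 1) / γ))) * ω ^ β * Real.exp (-(ω ^ γ))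
  else 0

/-- Radial fiducial vector V_r(ν) = ‖ν‖^{(γ−1)/2} V₁D(‖ν‖). -/
def Vrad (β γ : ℝ) (ν : Fin 2 → ℝ) : ℝ := nrm ν ^ ((γ - 1) / 2) * V1D β γ (nrm ν)

/-- Geometrically anisotropic coherent state in the frequency domain:
`V_ξ(ω) = a^{1/γ} |det P|^{−1/2} V_r(a^{1/γ} r_{−θ} Qᵀω) exp(−i (b·Qᵀω) ‖Qᵀω‖^{γ−1})`
with `Q = P⁻¹`. -/
def cstate (β γ : ℝ) (P : Matrix (Fin 2) (Fin 2) ℝ) (a θ : ℝ) (b ω : Fin 2 → ℝ) : ℂ :=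
  ((a ^ (1 / γ) * |P.det| ^ (-(1 : ℝ) / 2) *
      Vrad β γ (fun i => a ^ (1 / γ) * (rot (-θ)).mulVec (P⁻¹.transpose.mulVec ω) i) : ℝ) : ℂ) *
    Complex.exp (-Complex.I *
      ((dot2 b (P⁻¹.transpose.mulVec ω) * nrm (P⁻¹.transpose.mulVec ω) ^ (γ - 1) : ℝ) : ℂ))

lemma integral_comp_mulVec' (M : Matrix (Fin 2) (Fin 2) ℝ) (hM : M.det ≠ 0)
    (f : (Fin 2 → ℝ) → ℝ) :
    ∫ x : Fin 2 → ℝ, f (M.mulVec x) = |M.det|⁻¹ * ∫ x, f x := by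
  have hinv : Invertible M := M.invertibleOfIsUnitDet (isUnit_iff_ne_zero.mpr hM)
  let e : (Fin 2 → ℝ) ≃ₗ[ℝ] (Fin 2 → ℝ) := M.toLinearEquiv' hinv
  let em : (Fin 2 → ℝ) ≃ᵐ (Fin 2 → ℝ) :=
    e.toContinuousLinearEquiv.toHomeomorph.toMeasurableEquiv
  have hdet : LinearMap.det (Matrix.toLin' M) = M.det := LinearMap.det_toLin' M
  have hmap : Measure.map em volume = ENNReal.ofReal |M.det|⁻¹ • volume := by
    rw [show (em : (Fin 2 → ℝ) → (Fin 2 → ℝ)) = ⇑(Matrix.toLin' M) from rfl]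
    rw [Measure.map_linearMap_addHaar_pi_eq_smul_addHaar (by rw [hdet]; exact hM)]
    rw [hdet, abs_inv]
  have h1 : ∫ x : Fin 2 → ℝ, f (M.mulVec x) = ∫ x, f (em x) := by congr 1
  rw [h1, ← MeasureTheory.integral_map_equiv em f, hmap, integral_smul_measure,
    ENNReal.toReal_ofReal (by positivity), smul_eq_mul]

lemma integral_radial (f : ℝ → ℝ) :
    ∫ x : Fin 2 → ℝ, f (nrm x) = (2 * π) * ∫ y in Ioi (0:ℝ), y * f y := by
  have hE := (EuclideanSpace.volume_preserving_symm_measurableEquiv_toLp (Fin 2)).integral_comp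
    (MeasurableEquiv.measurableEmbedding _) (fun x => f (nrm x))
  have h1 : ∫ x : Fin 2 → ℝ, f (nrm x) = ∫ x : EuclideanSpace ℝ (Fin 2), f ‖x‖ := by
    rw [← hE]
    refine integral_congr_ae (Filter.Eventually.of_forall fun x => ?_)
    simp only
    congr 1
    rw [EuclideanSpace.norm_eq]
    simp only [Fin.sum_univ_two, sq_abs, Real.norm_eq_abs]
    rfl
  rw [h1, MeasureTheory.integral_fun_norm_addHaar volume f]
  have hdim : Module.finrank ℝ (EuclideanSpace ℝ (Fin 2)) = 2 := finrank_euclideanSpace_fin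
  rw [hdim]
  have hball : (volume (Metric.ball (0 : EuclideanSpace ℝ (Fin 2)) 1)).toReal = π := by
    rw [EuclideanSpace.volume_ball]
    simp only [Fintype.card_fin, ENNReal.ofReal_one, one_pow, one_mul]
    rw [ENNReal.toReal_ofReal (by positivity)]
    norm_num
    exact sq_sqrt pi_pos.le
  rw [← measureReal_def] at hball; rw [hball]
  simp only [nsmul_eq_mul, smul_eq_mul, Nat.cast_ofNat]
  have h2 : ∫ y in Ioi (0:ℝ), y ^ (2-1) * f y = ∫ y in Ioi (0:ℝ), y * f y := by norm_num
  rw [h2]; ring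

/-- the energy of the geometrically anisotropic coherent state is independent of
`(a, θ, b, P)` and equals `(1/(2π)²) ∫ |V_ξ(ω)|² d²ω = (1/(2π)) ∫₀^∞ ω^γ V₁D(ω)² dω = r/2`. -/
theorem coherent_state_energy (β γ : ℝ) (hβ : 0 < β) (hγ : 0 < γ)
    (r : ℝ) (hr : r = (2 * β + 1) / γ)
    (P : Matrix (Fin 2) (Fin 2) ℝ) (hP : IsUnit P.det)
    (a θ : ℝ) (ha : 0 < a) (hθ : θ ∈ Set.Ico 0 (2 * π)) (b : Fin 2 → ℝ) :
    (1 / (2 * π) ^ 2) * ∫ ω : Fin 2 → ℝ, ‖cstate β γ P a θ b ω‖ ^ 2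
      = (1 / (2 * π)) * ∫ ω in Set.Ioi (0 : ℝ), ω ^ γ * (V1D β γ ω) ^ 2
    ∧ (1 / (2 * π)) * ∫ ω in Set.Ioi (0 : ℝ), ω ^ γ * (V1D β γ ω) ^ 2 = r / 2 := by
  have hdP : P.det ≠ 0 := hP.ne_zero
  have hπ := pi_pos
  have hrpos : 0 < r := by rw [hr]; positivity
  have hΓ : 0 < Real.Gamma r := Real.Gamma_pos_of_pos hrpos
  constructor
  · -- Part 1
    set c : ℝ := a ^ (1 / γ) with hc
    have hcpos : 0 < c := Real.rpow_pos_of_pos ha _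
    set M : Matrix (Fin 2) (Fin 2) ℝ := c • (rot (-θ) * P⁻¹.transpose) with hM
    have hrotdet : (rot (-θ)).det = 1 := by
      simp [rot, Matrix.det_fin_two_of]
      nlinarith [sin_sq_add_cos_sq θ, sin_neg θ, cos_neg θ]
    have hMdet : M.det = c ^ 2 * (P.det)⁻¹ := by
      rw [hM, Matrix.det_smul, Matrix.det_mul, hrotdet, Matrix.det_transpose,
        Matrix.det_nonsing_inv]
      simp [Fintype.card_fin]
    have hMdet0 : M.det ≠ 0 := by
      rw [hMdet]; positivity
    have hpt : ∀ ω : Fin 2 → ℝ, ‖cstate β γ P a θ b ω‖ ^ 2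
        = (c ^ 2 * |P.det|⁻¹) * (Vrad β γ (M.mulVec ω)) ^ 2 := by
      intro ω
      have hv : (fun i => c * (rot (-θ)).mulVec (P⁻¹.transpose.mulVec ω) i) = M.mulVec ω := by
        funext i
        rw [hM, Matrix.smul_mulVec, Matrix.mulVec_mulVec]
        simp
      have hexp : ‖Complex.exp (-Complex.I *
          ((dot2 b (P⁻¹.transpose.mulVec ω) * nrm (P⁻¹.transpose.mulVec ω) ^ (γ - 1) : ℝ) : ℂ))‖
          = 1 := by
        rw [Complex.norm_exp]
        simp [Complex.mul_re]
      rw [cstate, norm_mul, hexp, mul_one, Complex.norm_real, Real.norm_eq_abs, sq_abs, ← hc, hv]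
      have habs : (|P.det| ^ (-(1:ℝ)/2)) ^ (2:ℕ) = |P.det|⁻¹ := by
        rw [← Real.rpow_natCast (|P.det| ^ (-(1:ℝ)/2)) 2, ← Real.rpow_mul (abs_nonneg _)]
        norm_num
        rw [Real.rpow_neg_one]
      rw [mul_pow, mul_pow, habs]
    simp_rw [hpt]
    rw [integral_const_mul, integral_comp_mulVec' M hMdet0 (fun v => (Vrad β γ v) ^ 2)]
    have hconst : (c ^ 2 * |P.det|⁻¹) * |M.det|⁻¹ = 1 := by
      rw [hMdet, abs_mul, abs_inv, abs_pow, abs_of_pos hcpos]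
      field_simp
    rw [show c ^ 2 * |P.det|⁻¹ * (|M.det|⁻¹ * ∫ x : Fin 2 → ℝ, Vrad β γ x ^ 2)
        = (c ^ 2 * |P.det|⁻¹ * |M.det|⁻¹) * ∫ x : Fin 2 → ℝ, Vrad β γ x ^ 2 from by ring,
      hconst, one_mul]
    have hrad : ∫ v : Fin 2 → ℝ, (Vrad β γ v) ^ 2
        = (2 * π) * ∫ y in Ioi (0:ℝ), y * (y ^ ((γ-1)/2) * V1D β γ y) ^ 2 := by
      rw [← integral_radial (fun ρ => (ρ ^ ((γ-1)/2) * V1D β γ ρ) ^ 2)]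
      rfl
    rw [hrad]
    have hcongr : ∫ y in Ioi (0:ℝ), y * (y ^ ((γ-1)/2) * V1D β γ y) ^ 2
        = ∫ y in Ioi (0:ℝ), y ^ γ * (V1D β γ y) ^ 2 := by
      refine setIntegral_congr_fun measurableSet_Ioi (fun y hy => ?_)
      have hy : (0:ℝ) < y := hy
      have e1 : ((y:ℝ) ^ ((γ-1)/2)) ^ (2:ℕ) = y ^ (γ-1) := by
        rw [← Real.rpow_natCast (y ^ ((γ-1)/2)) 2, ← Real.rpow_mul hy.le]
        norm_num
      have e2 : y * y ^ (γ-1) = y ^ γ := by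
        nth_rewrite 1 [← Real.rpow_one y]
        rw [← Real.rpow_add hy]; norm_num
      rw [mul_pow, e1, ← mul_assoc, e2]
    rw [hcongr]
    field_simp
  · -- Part 2
    have hC2 : ((2:ℝ) ^ ((r + 1) / 2) * Real.sqrt (π * γ) / Real.sqrt (Real.Gamma r)) ^ 2
        = 2 ^ (r + 1) * (π * γ) / Real.Gamma r := by
      rw [div_pow, mul_pow, sq_sqrt (by positivity), sq_sqrt hΓ.le,
        ← Real.rpow_natCast ((2:ℝ) ^ ((r+1)/2)) 2, ← Real.rpow_mul (by norm_num)]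
      norm_num
    set C : ℝ := 2 ^ ((r + 1) / 2) * Real.sqrt (π * γ) / Real.sqrt (Real.Gamma r) with hCdef
    have hV : ∀ y ∈ Ioi (0:ℝ), V1D β γ y = C * y ^ β * Real.exp (-(y ^ γ)) := by
      intro y hy
      rw [V1D, if_pos (mem_Ioi.mp hy), hCdef, ← hr]
    have hI : ∫ y in Ioi (0:ℝ), y ^ γ * (V1D β γ y) ^ 2
        = C ^ 2 * ∫ y in Ioi (0:ℝ), y ^ (2*β+γ) * Real.exp (-2 * y ^ γ) := by
      rw [← integral_const_mul]
      refine setIntegral_congr_fun measurableSet_Ioi (fun y hy => ?_)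
      have hy' : (0:ℝ) < y := hy
      rw [hV y hy]
      have e1 : ((y:ℝ) ^ β) ^ (2:ℕ) = y ^ (2*β) := by
        rw [← Real.rpow_natCast (y ^ β) 2, ← Real.rpow_mul hy'.le]
        norm_num; rw [mul_comm]
      have e2 : Real.exp (-(y ^ γ)) ^ (2:ℕ) = Real.exp (-2 * y ^ γ) := by
        rw [← Real.exp_nat_mul]; congr 1; ring
      have e3 : y ^ γ * y ^ (2*β) = y ^ (2*β+γ) := by
        rw [← Real.rpow_add hy']; congr 1; ring
      rw [mul_pow, mul_pow, e1, e2, ← e3]; ring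
    have hG := integral_rpow_mul_exp_neg_mul_rpow (p := γ) (q := 2*β+γ) (b := 2) hγ
      (by linarith) (by norm_num)
    have hq1 : (2*β+γ+1)/γ = r + 1 := by rw [hr]; field_simp; ring
    have hq2 : -(2*β+γ+1)/γ = -(r+1) := by rw [neg_div, hq1]
    rw [hI, hG, hq2, hq1, Real.Gamma_add_one hrpos.ne', hC2]
    have h2 : (2:ℝ) ^ (r+1) * 2 ^ (-1 + -r) = 1 := by
      rw [← Real.rpow_add two_pos, show r+1+(-1 + -r) = 0 by ring, Real.rpow_zero]
    field_simp
    rw [← Real.rpow_add two_pos, show r+1+(-(r+1)) = 0 by ring, Real.rpow_zero]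
end
end

section
/- Let P be an invertible real 2×2 matrix with Q = P^{−1}, let γ > 0, C > 1 and E₃, E₄ > 0 with E₃ = C₃^{γ−1}/C₄ and E₄ = C₃^γ. Then the 4-dimensional Lebesgue measure of the geometrically anisotropic localisation region D(C) = {(x, ω) ∈ ℝ² × ℝ² : (‖Px‖ ‖Qᵀω‖ E₃)² + (‖Qᵀω‖^γ − C E₄)² ≤ E₄² (C² − 1)} equals (2π² (C₃ C₄)²/γ) · Area(C), where Area(C) = 2C√(C²−1) + log((C − √(C²−1))/(C + √(C²−1))). In particular the measure does not depend on P, and it factors as a function of (β, γ) times a function of C alone. -/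
noncomputable section
open MeasureTheory Real Set

set_option maxHeartbeats 1000000

lemma continuous_nrm : Continuous nrm := by unfold nrm; fun_prop

lemma nrm_nonneg (v : Fin 2 → ℝ) : 0 ≤ nrm v := Real.sqrt_nonneg _

lemma nrm_coe (y : EuclideanSpace ℝ (Fin 2)) :
    nrm (((MeasurableEquiv.toLp 2 (Fin 2 → ℝ)).symm) y) = ‖y‖ := by
  rw [EuclideanSpace.norm_eq]
  simp [nrm, Fin.sum_univ_two, MeasurableEquiv.coe_toLp_symm, sq_abs]

lemma vol_disc {R : ℝ} (hR : 0 ≤ R) :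
    volume {x : Fin 2 → ℝ | nrm x ≤ R} = ENNReal.ofReal (π * R ^ 2) := by
  have hms : MeasurableSet {x : Fin 2 → ℝ | nrm x ≤ R} :=
    (isClosed_le continuous_nrm continuous_const).measurableSet
  rw [← (EuclideanSpace.volume_preserving_symm_measurableEquiv_toLp (Fin 2)).measure_preimage
    hms.nullMeasurableSet]
  have : ((MeasurableEquiv.toLp 2 (Fin 2 → ℝ)).symm) ⁻¹' {x : Fin 2 → ℝ | nrm x ≤ R}
      = Metric.closedBall (0 : EuclideanSpace ℝ (Fin 2)) R := by
    ext y
    rw [mem_preimage, mem_setOf_eq, nrm_coe]; simp [Metric.mem_closedBall, dist_zero_right]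
  rw [this, EuclideanSpace.volume_closedBall]
  rw [Fintype.card_fin]
  norm_num
  rw [← ENNReal.ofReal_pow (Real.sqrt_nonneg _), Real.sq_sqrt Real.pi_nonneg, ← ENNReal.ofReal_pow hR, ← ENNReal.ofReal_mul (by positivity)]
  ring_nf

lemma radial_lintegral (g : ℝ → ℝ) (hg : Measurable g) (hg0 : ∀ t, 0 ≤ g t)
    (hInt : Integrable (fun y : EuclideanSpace ℝ (Fin 2) => g ‖y‖)) :
    ∫⁻ x : Fin 2 → ℝ, ENNReal.ofReal (g (nrm x))
      = ENNReal.ofReal (2 * π * ∫ y in Ioi (0:ℝ), y * g y) := by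
  have hmp := EuclideanSpace.volume_preserving_symm_measurableEquiv_toLp (Fin 2)
  have h1 : ∫⁻ x : Fin 2 → ℝ, ENNReal.ofReal (g (nrm x))
      = ∫⁻ y : EuclideanSpace ℝ (Fin 2), ENNReal.ofReal (g ‖y‖) := by
    have hnrm : Measurable nrm := by
      unfold nrm; fun_prop
    rw [show (fun x : Fin 2 → ℝ => ENNReal.ofReal (g (nrm x)))
        = (fun x => ENNReal.ofReal (g (nrm x))) from rfl,
      ← hmp.lintegral_comp (f := fun x => ENNReal.ofReal (g (nrm x)))
        ((ENNReal.measurable_ofReal.comp (hg.comp hnrm)))]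
    simp_rw [nrm_coe]
  rw [h1, ← ofReal_integral_eq_lintegral_ofReal hInt (Filter.Eventually.of_forall fun y => hg0 _)]
  congr 1
  rw [integral_fun_norm_addHaar (volume : Measure (EuclideanSpace ℝ (Fin 2))) g]
  have hdim : Module.finrank ℝ (EuclideanSpace ℝ (Fin 2)) = 2 := by
    simp [finrank_euclideanSpace]
  rw [hdim]
  have hb : (volume (Metric.ball (0 : EuclideanSpace ℝ (Fin 2)) 1)).toReal = π := by
    rw [EuclideanSpace.volume_ball]
    simp
    rw [Real.sq_sqrt Real.pi_nonneg]
    norm_num [ENNReal.toReal_ofReal Real.pi_nonneg]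
  rw [measureReal_def, hb]
  simp only [smul_eq_mul, nsmul_eq_mul, Nat.cast_ofNat, pow_one]
  rw [← mul_assoc, mul_comm (2:ℝ) π]
  norm_num

lemma key_integral (γ C E₃ E₄ : ℝ) (hγ : 0 < γ) (hC : 1 < C) (hE₃ : 0 < E₃) (hE₄ : 0 < E₄) :
    ∫ y in Ioi (0:ℝ), y * (Set.indicator
        (Icc ((E₄*(C - Real.sqrt (C^2-1)))^(1/γ)) ((E₄*(C + Real.sqrt (C^2-1)))^(1/γ)))
        (fun t => π * (E₄^2*(C^2-1) - (t^γ - C*E₄)^2) / (t^2 * E₃^2)) y)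
      = π * E₄^2 / (γ * E₃^2) *
        (2*C*Real.sqrt (C^2-1) + Real.log ((C - Real.sqrt (C^2-1))/(C + Real.sqrt (C^2-1)))) := by
  set s : ℝ := Real.sqrt (C^2-1) with hs
  have hC0 : 0 < C := lt_trans one_pos hC
  have hC21 : 0 < C^2 - 1 := by nlinarith
  have hs0 : 0 < s := Real.sqrt_pos.2 hC21
  have hs2 : s^2 = C^2 - 1 := Real.sq_sqrt hC21.le
  have hsC : s < C := by nlinarith
  set a : ℝ := E₄*(C - s) with ha_def
  set b : ℝ := E₄*(C + s) with hb_def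
  have ha : 0 < a := by rw [ha_def]; nlinarith
  have hb : 0 < b := by rw [hb_def]; nlinarith
  have hab : a ≤ b := by nlinarith
  set a' : ℝ := a ^ (1/γ) with ha'_def
  set b' : ℝ := b ^ (1/γ) with hb'_def
  have ha'0 : 0 < a' := Real.rpow_pos_of_pos ha _
  have ha'b' : a' ≤ b' := Real.rpow_le_rpow ha.le hab (by positivity)
  have hga : (1/γ) * γ = 1 := by field_simp
  have haγ : a' ^ γ = a := by
    rw [ha'_def, ← Real.rpow_mul ha.le, hga, Real.rpow_one]
  have hbγ : b' ^ γ = b := by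
    rw [hb'_def, ← Real.rpow_mul hb.le, hga, Real.rpow_one]
  set φ : ℝ → ℝ := fun t => π * (E₄^2*(C^2-1) - (t^γ - C*E₄)^2) / (t^2 * E₃^2) with hφ
  set ψ : ℝ → ℝ := fun t => t * φ t with hψ
  have step1 : ∀ y : ℝ, y * (Icc a' b').indicator φ y = (Icc a' b').indicator ψ y := by
    intro y
    by_cases h : y ∈ Icc a' b' <;> simp [Set.indicator, h, hψ]
  simp_rw [step1]
  rw [setIntegral_indicator measurableSet_Icc,
    show Ioi (0:ℝ) ∩ Icc a' b' = Icc a' b' from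
      inter_eq_self_of_subset_right (fun x hx => lt_of_lt_of_le ha'0 hx.1),
    integral_Icc_eq_integral_Ioc, ← intervalIntegral.integral_of_le ha'b']
  set F : ℝ → ℝ := fun t => π/E₃^2 *
    (-(E₄^2) * Real.log t - t^(2*γ)/(2*γ) + 2*C*E₄ * t^γ/γ) with hF
  have hderiv : ∀ t ∈ uIcc a' b', HasDerivAt F (ψ t) t := by
    intro t ht
    rw [uIcc_of_le ha'b'] at ht
    have ht0 : 0 < t := lt_of_lt_of_le ha'0 ht.1
    have h1 : HasDerivAt (fun u : ℝ => Real.log u) t⁻¹ t := Real.hasDerivAt_log ht0.ne'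
    have h2 : HasDerivAt (fun u : ℝ => u^(2*γ)) ((2*γ) * t^(2*γ-1)) t :=
      Real.hasDerivAt_rpow_const (Or.inl ht0.ne')
    have h3 : HasDerivAt (fun u : ℝ => u^γ) (γ * t^(γ-1)) t :=
      Real.hasDerivAt_rpow_const (Or.inl ht0.ne')
    have H := (((h1.const_mul (-(E₄^2))).sub (h2.div_const (2*γ))).add
      ((h3.const_mul (2*C*E₄)).div_const γ)).const_mul (π/E₃^2)
    refine H.congr_deriv (Eq.symm ?_)
    have e2 : t^(2*γ-1) = t^(2*γ) * t⁻¹ := by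
      rw [Real.rpow_sub ht0, Real.rpow_one]; ring
    have e3 : t^(γ-1) = t^γ * t⁻¹ := by rw [Real.rpow_sub ht0, Real.rpow_one]; ring
    have e1 : t^(2*γ) = (t^γ)^2 := by rw [two_mul, Real.rpow_add ht0, sq]
    rw [hψ, hφ]
    simp only [e2, e3, e1]
    field_simp
    ring
  have hcont : ContinuousOn ψ (uIcc a' b') := by
    intro t ht
    rw [uIcc_of_le ha'b'] at ht
    have ht0 : 0 < t := lt_of_lt_of_le ha'0 ht.1
    apply ContinuousAt.continuousWithinAt
    have hrp : ContinuousAt (fun u : ℝ => u ^ γ) t :=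
      Real.continuousAt_rpow_const t γ (Or.inl ht0.ne')
    have hnum : ContinuousAt (fun u : ℝ => π * (E₄^2*(C^2-1) - (u^γ - C*E₄)^2)) t :=
      continuousAt_const.mul (continuousAt_const.sub ((hrp.sub continuousAt_const).pow 2))
    have hden : ContinuousAt (fun u : ℝ => u^2 * E₃^2) t := by fun_prop
    have hne : t^2 * E₃^2 ≠ 0 := by positivity
    exact continuousAt_id.mul (hnum.div hden hne)
  rw [intervalIntegral.integral_eq_sub_of_hasDerivAt hderiv hcont.intervalIntegrable]
  have hla : Real.log a' = (1/γ) * Real.log a := by rw [ha'_def, Real.log_rpow ha]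
  have hlb : Real.log b' = (1/γ) * Real.log b := by rw [hb'_def, Real.log_rpow hb]
  have hb'0 : 0 < b' := Real.rpow_pos_of_pos hb _
  have ha2γ : a'^(2*γ) = a^2 := by
    rw [two_mul, Real.rpow_add ha'0, haγ, sq]
  have hb2γ : b'^(2*γ) = b^2 := by
    rw [two_mul, Real.rpow_add hb'0, hbγ, sq]
  have hlog : Real.log ((C-s)/(C+s)) = Real.log a - Real.log b := by
    rw [← Real.log_div ha.ne' hb.ne', ha_def, hb_def,
      mul_div_mul_left _ _ hE₄.ne']
  rw [hF]
  simp only [hlog, hla, hlb, ha2γ, hb2γ, haγ, hbγ, ha_def, hb_def]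
  field_simp
  ring

section Ctx
variable {γ C E₃ E₄ : ℝ} (hγ : 0 < γ) (hC : 1 < C) (hE₃ : 0 < E₃) (hE₄ : 0 < E₄)
include hγ hC hE₃ hE₄

lemma section_vol (t : ℝ) (ht : 0 ≤ t) :
    volume {x : Fin 2 → ℝ | (nrm x * t * E₃)^2 + (t^γ - C*E₄)^2 ≤ E₄^2*(C^2-1)}
      = ENNReal.ofReal ((Icc ((E₄*(C - Real.sqrt (C^2-1)))^(1/γ))
          ((E₄*(C + Real.sqrt (C^2-1)))^(1/γ))).indicator
          (fun u => π * (E₄^2*(C^2-1) - (u^γ - C*E₄)^2) / (u^2 * E₃^2)) t) := by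
  set s : ℝ := Real.sqrt (C^2-1) with hs
  have hC0 : 0 < C := lt_trans one_pos hC
  have hC21 : 0 < C^2 - 1 := by nlinarith
  have hs0 : 0 < s := Real.sqrt_pos.2 hC21
  have hs2 : s^2 = C^2 - 1 := Real.sq_sqrt hC21.le
  have hsC : s < C := by nlinarith
  set a : ℝ := E₄*(C - s) with ha_def
  set b : ℝ := E₄*(C + s) with hb_def
  have ha : 0 < a := by rw [ha_def]; nlinarith
  have hb : 0 < b := by rw [hb_def]; nlinarith
  set a' : ℝ := a ^ (1/γ) with ha'_def
  set b' : ℝ := b ^ (1/γ) with hb'_def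
  have ha'0 : 0 < a' := Real.rpow_pos_of_pos ha _
  have hga : (1/γ) * γ = 1 := by field_simp
  have haγ : a' ^ γ = a := by
    rw [ha'_def, ← Real.rpow_mul ha.le, hga, Real.rpow_one]
  have hbγ : b' ^ γ = b := by
    rw [hb'_def, ← Real.rpow_mul hb.le, hga, Real.rpow_one]
  by_cases hmem : t ∈ Icc a' b'
  · have ht0 : 0 < t := lt_of_lt_of_le ha'0 hmem.1
    have htγa : a ≤ t^γ := by
      rw [← haγ]; exact Real.rpow_le_rpow ha'0.le hmem.1 hγ.le
    have htγb : t^γ ≤ b := by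
      rw [← hbγ]; exact Real.rpow_le_rpow ht0.le hmem.2 hγ.le
    have hK : 0 ≤ E₄^2*(C^2-1) - (t^γ - C*E₄)^2 := by
      have h1 : -(E₄*s) ≤ t^γ - C*E₄ := by rw [ha_def] at htγa; nlinarith
      have h2 : t^γ - C*E₄ ≤ E₄*s := by rw [hb_def] at htγb; nlinarith
      nlinarith [sq_le_sq' h1 h2]
    set K : ℝ := E₄^2*(C^2-1) - (t^γ - C*E₄)^2 with hKdef
    have hset : {x : Fin 2 → ℝ | (nrm x * t * E₃)^2 + (t^γ - C*E₄)^2 ≤ E₄^2*(C^2-1)}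
        = {x : Fin 2 → ℝ | nrm x ≤ Real.sqrt K / (t * E₃)} := by
      ext x
      have hx0 : 0 ≤ nrm x := nrm_nonneg x
      have htE : 0 < t * E₃ := by positivity
      simp only [mem_setOf_eq]
      constructor
      · intro h
        rw [le_div_iff₀ htE]
        rw [Real.le_sqrt (by positivity) hK]
        nlinarith
      · intro h
        rw [le_div_iff₀ htE, Real.le_sqrt (by positivity) hK] at h
        nlinarith
    rw [hset, vol_disc (by positivity)]
    rw [Set.indicator_of_mem hmem]
    congr 1
    rw [div_pow, Real.sq_sqrt hK, hKdef, mul_pow, ← mul_div_assoc]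
  · have hKneg : E₄^2*(C^2-1) < (t^γ - C*E₄)^2 := by
      rw [mem_Icc, not_and_or] at hmem
      rcases hmem with h | h
      · push_neg at h
        have : t^γ < a := by
          calc t^γ < a'^γ := Real.rpow_lt_rpow ht h hγ
          _ = a := haγ
        rw [ha_def] at this
        nlinarith [hs2, mul_pos (show (0:ℝ) < -(t^γ - C*E₄) - E₄*s from by nlinarith)
          (show (0:ℝ) < -(t^γ - C*E₄) + E₄*s from by nlinarith)]
      · push_neg at h
        have : b < t^γ := by
          calc b = b'^γ := hbγ.symm
          _ < t^γ := Real.rpow_lt_rpow (Real.rpow_pos_of_pos hb _).le h hγ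
        rw [hb_def] at this
        nlinarith [hs2, mul_pos (show (0:ℝ) < (t^γ - C*E₄) - E₄*s from by nlinarith)
          (show (0:ℝ) < (t^γ - C*E₄) + E₄*s from by nlinarith)]
    have hset : {x : Fin 2 → ℝ | (nrm x * t * E₃)^2 + (t^γ - C*E₄)^2 ≤ E₄^2*(C^2-1)} = ∅ := by
      ext x
      simp only [mem_setOf_eq, mem_empty_iff_false, iff_false, not_le]
      nlinarith [sq_nonneg (nrm x * t * E₃)]
    rw [hset, Set.indicator_of_notMem hmem, measure_empty, ENNReal.ofReal_zero]

lemma g_meas : Measurable ((Icc ((E₄*(C - Real.sqrt (C^2-1)))^(1/γ))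
    ((E₄*(C + Real.sqrt (C^2-1)))^(1/γ))).indicator
    (fun u => π * (E₄^2*(C^2-1) - (u^γ - C*E₄)^2) / (u^2 * E₃^2))) := by
  have h1 : Continuous fun u:ℝ => u ^ γ := Real.continuous_rpow_const hγ.le
  exact Measurable.indicator
    ((continuous_const.mul (continuous_const.sub
      ((h1.sub continuous_const).pow 2))).measurable.div
      (((continuous_pow 2).mul continuous_const).measurable))
    measurableSet_Icc

lemma g_nonneg : ∀ u, 0 ≤ ((Icc ((E₄*(C - Real.sqrt (C^2-1)))^(1/γ))
    ((E₄*(C + Real.sqrt (C^2-1)))^(1/γ))).indicator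
    (fun u => π * (E₄^2*(C^2-1) - (u^γ - C*E₄)^2) / (u^2 * E₃^2))) u := by
  intro u
  apply Set.indicator_nonneg
  intro t hmem
  set s : ℝ := Real.sqrt (C^2-1) with hs
  have hC0 : 0 < C := lt_trans one_pos hC
  have hC21 : 0 < C^2 - 1 := by nlinarith
  have hs0 : 0 < s := Real.sqrt_pos.2 hC21
  have hs2 : s^2 = C^2 - 1 := Real.sq_sqrt hC21.le
  have hsC : s < C := by nlinarith
  have ha : 0 < E₄*(C - s) := by nlinarith
  have hb : 0 < E₄*(C + s) := by nlinarith
  have hga : (1/γ) * γ = 1 := by field_simp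
  have ha'0 : 0 < (E₄*(C-s)) ^ (1/γ) := Real.rpow_pos_of_pos ha _
  have ht0 : 0 < t := lt_of_lt_of_le ha'0 hmem.1
  have htγa : E₄*(C-s) ≤ t^γ := by
    calc E₄*(C-s) = ((E₄*(C-s))^(1/γ))^γ := by
          rw [← Real.rpow_mul ha.le, hga, Real.rpow_one]
    _ ≤ t^γ := Real.rpow_le_rpow ha'0.le hmem.1 hγ.le
  have htγb : t^γ ≤ E₄*(C+s) := by
    calc t^γ ≤ ((E₄*(C+s))^(1/γ))^γ := Real.rpow_le_rpow ht0.le hmem.2 hγ.le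
    _ = E₄*(C+s) := by rw [← Real.rpow_mul hb.le, hga, Real.rpow_one]
  have hK : 0 ≤ E₄^2*(C^2-1) - (t^γ - C*E₄)^2 := by
    have h1 : -(E₄*s) ≤ t^γ - C*E₄ := by nlinarith
    have h2 : t^γ - C*E₄ ≤ E₄*s := by nlinarith
    nlinarith [sq_le_sq' h1 h2]
  positivity

lemma g_integrable : Integrable (fun y : EuclideanSpace ℝ (Fin 2) =>
    ((Icc ((E₄*(C - Real.sqrt (C^2-1)))^(1/γ))
    ((E₄*(C + Real.sqrt (C^2-1)))^(1/γ))).indicator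
    (fun u => π * (E₄^2*(C^2-1) - (u^γ - C*E₄)^2) / (u^2 * E₃^2))) ‖y‖) := by
  set s : ℝ := Real.sqrt (C^2-1) with hs
  have hC0 : 0 < C := lt_trans one_pos hC
  have hC21 : 0 < C^2 - 1 := by nlinarith
  have hs0 : 0 < s := Real.sqrt_pos.2 hC21
  have hsC : s < C := by nlinarith [Real.sq_sqrt hC21.le]
  have ha : 0 < E₄*(C - s) := by nlinarith
  set a' : ℝ := (E₄*(C - s)) ^ (1/γ) with ha'_def
  set b' : ℝ := (E₄*(C + s)) ^ (1/γ) with hb'_def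
  have ha'0 : 0 < a' := Real.rpow_pos_of_pos ha _
  set M : ℝ := π * (E₄^2*(C^2-1)) / (a'^2 * E₃^2) with hM
  have hM0 : 0 ≤ M := by positivity
  apply Integrable.mono'
    (g := (Metric.closedBall (0:EuclideanSpace ℝ (Fin 2)) b').indicator fun _ => M)
  · rw [integrable_indicator_iff measurableSet_closedBall]
    exact integrableOn_const measure_closedBall_lt_top.ne
  · exact ((g_meas hγ hC hE₃ hE₄).comp measurable_norm).aestronglyMeasurable
  · apply Filter.Eventually.of_forall
    intro y
    by_cases h : ‖y‖ ∈ Icc a' b'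
    · rw [Set.indicator_of_mem h]
      have hyball : y ∈ Metric.closedBall (0:EuclideanSpace ℝ (Fin 2)) b' := by
        rw [Metric.mem_closedBall, dist_zero_right]; exact h.2
      rw [Set.indicator_of_mem hyball]
      set t : ℝ := ‖y‖
      have ht0 : 0 < t := lt_of_lt_of_le ha'0 h.1
      have hnum0 : 0 ≤ π * (E₄^2*(C^2-1) - (t^γ - C*E₄)^2) / (t^2 * E₃^2) := by
        have := g_nonneg hγ hC hE₃ hE₄ t
        rwa [Set.indicator_of_mem h] at this
      rw [Real.norm_eq_abs, abs_of_nonneg hnum0, hM]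
      apply div_le_div₀ (by positivity)
      · have : (E₄^2*(C^2-1) - (t^γ - C*E₄)^2) ≤ E₄^2*(C^2-1) := by
          nlinarith [sq_nonneg (t^γ - C*E₄)]
        nlinarith [Real.pi_pos]
      · positivity
      · have h2 : a'^2 ≤ t^2 := by nlinarith [h.1]
        exact mul_le_mul_of_nonneg_right h2 (sq_nonneg E₃)
    · rw [Set.indicator_of_notMem h]
      simp only [norm_zero]
      exact Set.indicator_nonneg (fun _ _ => hM0) y

end Ctx

/-- the 4-dimensional Lebesgue measure of the geometrically anisotropic
localisation region
`D(C) = {(x, ω) : (‖Px‖ ‖Qᵀω‖ E₃)² + (‖Qᵀω‖^γ − C E₄)² ≤ E₄² (C² − 1)}`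
equals `(2π² (C₃C₄)²/γ)·Area(C)` with
`Area(C) = 2C√(C²−1) + log((C − √(C²−1))/(C + √(C²−1)))`; in particular it does not depend
on `P`, and it factors as a function of `(β, γ)` times a function of `C` alone. -/
theorem localisation_region_hypervolume (β γ : ℝ) (hβ : 0 < β) (hγ : 0 < γ)
    (r : ℝ) (hr : r = (2 * β + 1) / γ)
    (C₃ C₄ E₃ E₄ : ℝ)
    (hC₃ : C₃ = Real.Gamma (r + 1 / γ + 1) / (2 ^ (1 / γ) * Real.Gamma (r + 1)))
    (hC₄ : C₄ = 2 ^ (1 / γ - 2) * (γ + 1) * Real.Gamma (r - 1 / γ + 2) / Real.Gamma (r + 1))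
    (hE₃ : E₃ = C₃ ^ (γ - 1) / C₄) (hE₄ : E₄ = C₃ ^ γ)
    (P : Matrix (Fin 2) (Fin 2) ℝ) (hP : IsUnit P.det)
    (C : ℝ) (hC : 1 < C) :
    volume {p : (Fin 2 → ℝ) × (Fin 2 → ℝ) |
        (nrm (P.mulVec p.1) * nrm (P⁻¹.transpose.mulVec p.2) * E₃) ^ 2 +
            (nrm (P⁻¹.transpose.mulVec p.2) ^ γ - C * E₄) ^ 2 ≤ E₄ ^ 2 * (C ^ 2 - 1)}
      = ENNReal.ofReal ((2 * π ^ 2 * (C₃ * C₄) ^ 2 / γ) *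
          (2 * C * Real.sqrt (C ^ 2 - 1) +
            Real.log ((C - Real.sqrt (C ^ 2 - 1)) / (C + Real.sqrt (C ^ 2 - 1))))) := by

  -- positivity of the constants
  have hr0 : 0 < r := by rw [hr]; positivity
  have hr1 : 0 < r - 1/γ + 2 := by
    have : r - 1/γ = 2*β/γ := by rw [hr]; field_simp; ring
    rw [this]; positivity
  have hΓ1 : 0 < Real.Gamma (r + 1 / γ + 1) := Real.Gamma_pos_of_pos (by positivity)
  have hΓ2 : 0 < Real.Gamma (r + 1) := Real.Gamma_pos_of_pos (by positivity)
  have hΓ3 : 0 < Real.Gamma (r - 1 / γ + 2) := Real.Gamma_pos_of_pos hr1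
  have hC₃0 : 0 < C₃ := by
    rw [hC₃]
    have : (0:ℝ) < 2 ^ (1/γ) := Real.rpow_pos_of_pos two_pos _
    positivity
  have hC₄0 : 0 < C₄ := by
    rw [hC₄]
    have : (0:ℝ) < 2 ^ (1/γ - 2) := Real.rpow_pos_of_pos two_pos _
    positivity
  have hE₃0 : 0 < E₃ := by
    rw [hE₃]
    have : (0:ℝ) < C₃ ^ (γ-1) := Real.rpow_pos_of_pos hC₃0 _
    positivity
  have hE₄0 : 0 < E₄ := by
    rw [hE₄]
    exact Real.rpow_pos_of_pos hC₃0 _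
  have hE : E₄ = C₃ * C₄ * E₃ := by
    rw [hE₃, hE₄]
    have h2 : C₃^γ = C₃ * C₃^(γ-1) := by
      have h3 := Real.rpow_add hC₃0 1 (γ-1)
      rw [Real.rpow_one, show (1:ℝ)+(γ-1) = γ from by ring] at h3
      exact h3
    rw [h2]; field_simp
  -- matrices
  have hdet : P.det ≠ 0 := by
    simpa [isUnit_iff_ne_zero] using hP
  have hQdet : (P⁻¹.transpose).det = (P.det)⁻¹ := by
    rw [Matrix.det_transpose, Matrix.det_nonsing_inv, Ring.inverse_eq_inv']
  have hQdet0 : (P⁻¹.transpose).det ≠ 0 := by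
    rw [hQdet]; exact inv_ne_zero hdet
  have hcontγ : Continuous fun u:ℝ => u ^ γ := Real.continuous_rpow_const hγ.le
  have hcontP : Continuous fun x : Fin 2 → ℝ => P.mulVec x := by
    have h := (Matrix.toLin' P).continuous_of_finiteDimensional
    convert h using 1
    ext x; simp [Matrix.toLin'_apply]
  have hcontQ : Continuous fun x : Fin 2 → ℝ => P⁻¹.transpose.mulVec x := by
    have h := (Matrix.toLin' P⁻¹.transpose).continuous_of_finiteDimensional
    convert h using 1
    ext x; simp [Matrix.toLin'_apply]
  set D : Set ((Fin 2 → ℝ) × (Fin 2 → ℝ)) := {p : (Fin 2 → ℝ) × (Fin 2 → ℝ) |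
        (nrm (P.mulVec p.1) * nrm (P⁻¹.transpose.mulVec p.2) * E₃) ^ 2 +
            (nrm (P⁻¹.transpose.mulVec p.2) ^ γ - C * E₄) ^ 2 ≤ E₄ ^ 2 * (C ^ 2 - 1)} with hD
  have hDmeas : MeasurableSet D := by
    apply IsClosed.measurableSet
    apply isClosed_le _ continuous_const
    apply Continuous.add
    · exact (((continuous_nrm.comp (hcontP.comp continuous_fst)).mul
        (continuous_nrm.comp (hcontQ.comp continuous_snd))).mul continuous_const).pow 2
    · exact ((hcontγ.comp (continuous_nrm.comp (hcontQ.comp continuous_snd))).sub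
        continuous_const).pow 2
  set g : ℝ → ℝ := (Icc ((E₄*(C - Real.sqrt (C^2-1)))^(1/γ))
      ((E₄*(C + Real.sqrt (C^2-1)))^(1/γ))).indicator
      (fun u => π * (E₄^2*(C^2-1) - (u^γ - C*E₄)^2) / (u^2 * E₃^2)) with hg
  -- Fubini
  rw [show volume (D : Set ((Fin 2 → ℝ) × (Fin 2 → ℝ)))
      = ((volume : Measure (Fin 2 → ℝ)).prod volume) D from by rw [← Measure.volume_eq_prod]]
  rw [Measure.prod_apply_symm hDmeas]
  have hinner : ∀ w : Fin 2 → ℝ, volume ((fun x => (x, w)) ⁻¹' D)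
      = ENNReal.ofReal |(P.det)⁻¹| * ENNReal.ofReal (g (nrm (P⁻¹.transpose.mulVec w))) := by
    intro w
    have hpre : ((fun x => (x, w)) ⁻¹' D) = (Matrix.toLin' P) ⁻¹'
        {x : Fin 2 → ℝ | (nrm x * nrm (P⁻¹.transpose.mulVec w) * E₃)^2 +
          ((nrm (P⁻¹.transpose.mulVec w))^γ - C*E₄)^2 ≤ E₄^2*(C^2-1)} := by
      ext x
      simp [hD, Matrix.toLin'_apply, mem_setOf_eq]
    rw [hpre, Measure.addHaar_preimage_linearMap volume
      (by rw [LinearMap.det_toLin']; exact hdet),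
      section_vol hγ hC hE₃0 hE₄0 _ (nrm_nonneg _), LinearMap.det_toLin']
  simp_rw [hinner]
  rw [lintegral_const_mul _ (by
    exact ENNReal.measurable_ofReal.comp ((g_meas hγ hC hE₃0 hE₄0).comp
      (continuous_nrm.comp hcontQ).measurable))]
  have hw : ∫⁻ w : Fin 2 → ℝ, ENNReal.ofReal (g (nrm (P⁻¹.transpose.mulVec w)))
      = ENNReal.ofReal |P.det| * ∫⁻ u : Fin 2 → ℝ, ENNReal.ofReal (g (nrm u)) := by
    have hmble : Measurable fun u : Fin 2 → ℝ => ENNReal.ofReal (g (nrm u)) :=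
      ENNReal.measurable_ofReal.comp ((g_meas hγ hC hE₃0 hE₄0).comp
        continuous_nrm.measurable)
    rw [← lintegral_map hmble hcontQ.measurable]
    have hmap : Measure.map (fun x : Fin 2 → ℝ => P⁻¹.transpose.mulVec x) volume
        = ENNReal.ofReal |((P⁻¹.transpose).det)⁻¹| • volume := by
      have h := Measure.map_linearMap_addHaar_eq_smul_addHaar
        (μ := (volume : Measure (Fin 2 → ℝ))) (f := Matrix.toLin' P⁻¹.transpose)
        (by rw [LinearMap.det_toLin']; exact hQdet0)
      rw [LinearMap.det_toLin'] at h
      convert h using 2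
      all_goals (ext x; simp [Matrix.toLin'_apply])
    rw [hmap, lintegral_smul_measure]
    congr 2
    rw [hQdet, inv_inv]
  rw [hw, ← mul_assoc, ← ENNReal.ofReal_mul (abs_nonneg _), ← abs_mul,
    inv_mul_cancel₀ hdet, abs_one, ENNReal.ofReal_one, one_mul]
  rw [radial_lintegral g (g_meas hγ hC hE₃0 hE₄0) (g_nonneg hγ hC hE₃0 hE₄0)
    (g_integrable hγ hC hE₃0 hE₄0)]
  rw [hg, key_integral γ C E₃ E₄ hγ hC hE₃0 hE₄0]
  congr 1
  rw [hE]
  field_simp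
end
end
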